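/- Let G be a directed graph with inconsistent edges E^i and let C, C' be source-equivalence classes with C' ∈ coupled⁺(C). Then there exists an edge R ∈ C such that for every S ∈ C', S ∈ coupled⁺(R), i.e., there exists an undirected path P from v_R to u_S with P ∩ u_R^{+,R} = ∅. -/

import Mathlib

namespace CQA

variable {V : Type*}

/-- Directed reachability along edges in `A`. -/
def reach (A : Set (V × V)) (u v : V) : Prop :=
  Relation.ReflTransGen (fun x y => (x, y) ∈ A) u v

/-- `u` and `v` are in the same strongly connected component of the graph with edges `E`. -/
def sameSCC (E : Set (V × V)) (u v : V) : Prop := reach E u v ∧ reach E v u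

/-- There is an undirected path in `E` from `a` to `b` all of whose vertices
(including the endpoints) avoid the set `A`. -/
def ureach (E : Set (V × V)) (A : Set V) (a b : V) : Prop :=
  a ∉ A ∧ Relation.ReflTransGen (fun x y => ((x, y) ∈ E ∨ (y, x) ∈ E) ∧ y ∉ A) a b

/-- `u_R^{+,R}`: vertices reachable from the source of `R` in `G − {R}`. -/
def uplus (E : Set (V × V)) (R : V × V) : Set V := {v | reach (E \ {R}) R.1 v}

/-- `u^⊕`: vertices reachable from `u` using only consistent edges `Ec`. -/
def uoplus (Ec : Set (V × V)) (u : V) : Set V := {v | reach Ec u v}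

/-- `C` is a source-equivalence class of inconsistent edges `Ei`. -/
def IsClass (E Ei : Set (V × V)) (C : Set (V × V)) : Prop :=
  ∃ R ∈ Ei, C = {S ∈ Ei | sameSCC E R.1 S.1}

/-- `C^⊕ = ⋂_{R ∈ C} u_R^⊕`. -/
def Coplus (Ec : Set (V × V)) (C : Set (V × V)) : Set V :=
  {v | ∀ R ∈ C, v ∈ uoplus Ec R.1}

/-- `C⁺ = ⋂_{R ∈ C} u_R^{+,R}`. -/
def Cplus (E : Set (V × V)) (C : Set (V × V)) : Set V :=
  {v | ∀ R ∈ C, v ∈ uplus E R}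

/-- `C₁ ≤⊕ C₂` iff some `S ∈ C₂` has `u_S ∈ C₁^⊕`. -/
def leOplus (Ec : Set (V × V)) (C₁ C₂ : Set (V × V)) : Prop :=
  ∃ S ∈ C₂, S.1 ∈ Coplus Ec C₁

/-- The strict order `C₁ <⊕ C₂`. -/
def ltOplus (Ec : Set (V × V)) (C₁ C₂ : Set (V × V)) : Prop :=
  leOplus Ec C₁ C₂ ∧ C₁ ≠ C₂

/-- A sink: a maximal element of `<⊕` among source-equivalence classes. -/
def IsSink (E Ei Ec : Set (V × V)) (C : Set (V × V)) : Prop :=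
  IsClass E Ei C ∧ ∀ C', IsClass E Ei C' → ¬ ltOplus Ec C C'

/-- `C' ∈ coupled⊕(C)`. -/
def coupledOplusCl (E Ec : Set (V × V)) (C C' : Set (V × V)) : Prop :=
  C' = C ∨ ∃ R ∈ C, ∃ S ∈ C', ureach E (Coplus Ec C) R.2 S.1

/-- `C' ∈ coupled⁺(C)`. -/
def coupledPlusCl (E : Set (V × V)) (C C' : Set (V × V)) : Prop :=
  C' = C ∨ ∃ R ∈ C, ∃ S ∈ C', ureach E (Cplus E C) R.2 S.1

/-- `S ∈ coupled⁺(R)` for inconsistent edges `R, S`: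
either `S ∈ [R]`, or there is an undirected path `v_R ↔ u_S` avoiding `u_R^{+,R}`. -/
def coupledPlusEdge (E Ei : Set (V × V)) (R S : V × V) : Prop :=
  S ∈ Ei ∧ (sameSCC E R.1 S.1 ∨ ureach E (uplus E R) R.2 S.1)

/-- `G` is splittable: every coupled pair of inconsistent edges is source-equivalent. -/
def Splittable (E Ec : Set (V × V)) : Prop :=
  ∀ R ∈ E \ Ec, ∀ S ∈ E \ Ec,
    coupledPlusEdge E (E \ Ec) R S → coupledPlusEdge E (E \ Ec) S R → sameSCC E R.1 S.1

/-- `G` is f-closed: for every inconsistent edge `R`,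
`v_R^⊕ ∩ u_R^{+,R} ⊆ u_R^⊕`. -/
def FClosed (E Ec : Set (V × V)) : Prop :=
  ∀ R ∈ E \ Ec, ∀ v, v ∈ uoplus Ec R.2 → v ∈ uplus E R → v ∈ uoplus Ec R.1

end CQA

/-!
Take the last vertex `z` of the given path from `v_R` to `u_{S₀}` that is reachable from the
sources of `C`. It lies outside `C⁺`, hence outside `u_T^{+,T}` for some `T ∈ C`; the rest of the
path avoids everything reachable from `u_T`, and `v_T` reaches `z` outside `u_T^{+,T}` since `T`
is the only edge leaving `u_T^{+,T}`. When `C' ≠ C`, the strongly connected component of `u_{S₀}`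
does not contain `u_T`, so it avoids `u_T^{+,T}`, which extends the path to every `u_S`, `S ∈ C'`.
-/

theorem Relation.ReflTransGen.exists_last_mem {α : Type*} {r : α → α → Prop} {X : Set α}
    {a b : α} (h : Relation.ReflTransGen r a b) (ha : a ∈ X) :
    ∃ z ∈ X, Relation.ReflTransGen r a z ∧
      Relation.ReflTransGen (fun x y => r x y ∧ y ∉ X) z b := by
  induction h with
  | refl => exact ⟨a, ha, .refl, .refl⟩
  | @tail b c hab hbc ih =>
    obtain ⟨z, hzX, haz, hzb⟩ := ih
    by_cases hc : c ∈ X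
    · exact ⟨c, hc, hab.tail hbc, .refl⟩
    · exact ⟨z, hzX, haz, hzb.tail ⟨hbc, hc⟩⟩

namespace CQA

open Relation

variable {V : Type*} {E : Set (V × V)}

theorem reach_mono {A B : Set (V × V)} (hAB : A ⊆ B) {u v : V} (h : reach A u v) :
    reach B u v :=
  ReflTransGen.mono (fun _ _ hxy => hAB hxy) u v h

theorem reach_of_mem_uplus {R : V × V} {v : V} (h : v ∈ uplus E R) : reach E R.1 v :=
  reach_mono Set.sdiff_subset h

theorem sameSCC.symm {u v : V} (h : sameSCC E u v) : sameSCC E v u := ⟨h.2, h.1⟩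

theorem sameSCC.trans {u v w : V} (h₁ : sameSCC E u v) (h₂ : sameSCC E v w) :
    sameSCC E u w :=
  ⟨h₁.1.trans h₂.1, h₂.2.trans h₁.2⟩

section IsClass

variable {Ei C : Set (V × V)}

theorem IsClass.subset (hC : IsClass E Ei C) : C ⊆ Ei := by
  obtain ⟨_, _, rfl⟩ := hC
  exact fun _ hS => hS.1

theorem IsClass.nonempty (hC : IsClass E Ei C) : C.Nonempty := by
  obtain ⟨R, hR, rfl⟩ := hC
  exact ⟨R, hR, .refl, .refl⟩

theorem IsClass.sameSCC (hC : IsClass E Ei C) {S T : V × V} (hS : S ∈ C) (hT : T ∈ C) :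
    sameSCC E S.1 T.1 := by
  obtain ⟨_, _, rfl⟩ := hC
  exact hS.2.symm.trans hT.2

theorem IsClass.mem_of_sameSCC (hC : IsClass E Ei C) {S T : V × V} (hS : S ∈ C) (hT : T ∈ Ei)
    (hST : CQA.sameSCC E S.1 T.1) : T ∈ C := by
  obtain ⟨_, _, rfl⟩ := hC
  exact ⟨hT, hS.2.trans hST⟩

theorem IsClass.eq_of_sameSCC {C' : Set (V × V)} (hC : IsClass E Ei C) (hC' : IsClass E Ei C')
    {S T : V × V} (hS : S ∈ C) (hT : T ∈ C') (hST : CQA.sameSCC E S.1 T.1) : C = C' := by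
  ext U
  constructor
  · exact fun hU => hC'.mem_of_sameSCC hT (hC.subset hU) (hST.symm.trans (hC.sameSCC hS hU))
  · exact fun hU => hC.mem_of_sameSCC hS (hC'.subset hU) (hST.trans (hC'.sameSCC hT hU))

end IsClass

section ureach

variable {A : Set V} {a b c : V}

theorem ureach.trans (h₁ : ureach E A a b) (h₂ : ureach E A b c) : ureach E A a c :=
  ⟨h₁.1, h₁.2.trans h₂.2⟩

theorem ureach.notMem_right (h : ureach E A a b) : b ∉ A := by
  obtain ⟨ha, hab⟩ := h
  induction hab with
  | refl => exact ha
  | tail _ hstep _ => exact hstep.2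

end ureach

theorem ureach_of_reach_of_notMem_uplus {R : V × V} (hR : R ∈ E) {x : V}
    (hx : reach E R.1 x) (hxR : x ∉ uplus E R) : ureach E (uplus E R) R.2 x := by
  induction hx with
  | refl => exact absurd .refl hxR
  | @tail y z _ hyz ih =>
    by_cases hy : y ∈ uplus E R
    · by_cases hyzR : (y, z) = R
      · subst hyzR
        exact ⟨hxR, .refl⟩
      · exact absurd (hy.tail ⟨hyz, hyzR⟩) hxR
    · obtain ⟨hvR, hwalk⟩ := ih hy
      exact ⟨hvR, hwalk.tail ⟨Or.inl hyz, hxR⟩⟩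

/-- Every vertex of a path from `z` back to `s` lies in the strongly connected component of `s`,
so such a path cannot use an edge whose source lies outside it. -/
theorem reach_diff_singleton_of_not_sameSCC {R : V × V} {s z : V} (hs : ¬ sameSCC E R.1 s)
    (hzs : reach E z s) (hsz : reach E s z) : reach (E \ {R}) z s := by
  induction hzs using ReflTransGen.head_induction_on with
  | refl => exact .refl
  | @head a c hac hcs ih =>
    have hacR : (a, c) ≠ R := by
      rintro rfl
      exact hs ⟨.head hac hcs, hsz⟩
    exact .head ⟨hac, hacR⟩ (ih (hsz.tail hac))

theorem notMem_uplus_of_sameSCC {R : V × V} {s z : V} (hs : ¬ sameSCC E R.1 s)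
    (hsR : s ∉ uplus E R) (hz : sameSCC E s z) : z ∉ uplus E R :=
  fun hzR => hsR (ReflTransGen.trans hzR (reach_diff_singleton_of_not_sameSCC hs hz.2 hz.1))

theorem ureach_of_sameSCC {W : Set V} {s z : V} (hW : ∀ y, sameSCC E s y → y ∉ W)
    (hz : sameSCC E s z) : ureach E W s z := by
  obtain ⟨hsz, hzs⟩ := hz
  induction hsz with
  | refl => exact ⟨hW s ⟨.refl, .refl⟩, .refl⟩
  | @tail y z hsy hyz ih =>
    obtain ⟨hsW, hwalk⟩ := ih (.head hyz hzs)
    exact ⟨hsW, hwalk.tail ⟨Or.inl hyz, hW z ⟨hsy.tail hyz, hzs⟩⟩⟩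

theorem exists_ureach_uplus_of_ureach_Cplus {C : Set (V × V)} (hCE : C ⊆ E)
    (hC : ∀ T₁ ∈ C, ∀ T₂ ∈ C, reach E T₁.1 T₂.1) {R : V × V} (hR : R ∈ C) {s : V}
    (hRs : ureach E (Cplus E C) R.2 s) : ∃ T ∈ C, ureach E (uplus E T) T.2 s := by
  obtain ⟨hvR, hwalk⟩ := hRs
  obtain ⟨z, hzX, hRz, hzs⟩ :=
    hwalk.exists_last_mem (X := {x | reach E R.1 x}) (ReflTransGen.single (hCE hR))
  have hzC : z ∉ Cplus E C := ureach.notMem_right ⟨hvR, hRz⟩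
  obtain ⟨T, hT, hzT⟩ : ∃ T ∈ C, z ∉ uplus E T := by
    simpa only [Cplus, Set.mem_ofPred_eq, not_forall, exists_prop] using hzC
  have hTz : ureach E (uplus E T) T.2 z :=
    ureach_of_reach_of_notMem_uplus (hCE hT) ((hC T hT R hR).trans hzX) hzT
  have hTX : uplus E T ⊆ {x | reach E R.1 x} :=
    fun _ hy => (hC R hR T hT).trans (reach_of_mem_uplus hy)
  exact ⟨T, hT, hTz.trans
    ⟨hzT, ReflTransGen.mono (fun _ _ hxy => ⟨hxy.1.1, fun hy => hxy.2 (hTX hy)⟩) _ _ hzs⟩⟩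

end CQA

open CQA in
theorem stmt_9_general {V : Type*} (E Ec : Set (V × V))
    (C C' : Set (V × V)) (hC : IsClass E (E \ Ec) C) (hC' : IsClass E (E \ Ec) C')
    (h : coupledPlusCl E C C') :
    ∃ R ∈ C, ∀ S ∈ C', coupledPlusEdge E (E \ Ec) R S := by
  by_cases hCC' : C = C'
  · subst hCC'
    obtain ⟨R, hR⟩ := hC.nonempty
    exact ⟨R, hR, fun S hS => ⟨hC.subset hS, Or.inl (hC.sameSCC hR hS)⟩⟩
  obtain rfl | ⟨R, hR, S₀, hS₀, hRS₀⟩ := h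
  · exact absurd rfl hCC'
  have hCE : C ⊆ E := hC.subset.trans Set.sdiff_subset
  obtain ⟨T, hT, hTS₀⟩ := exists_ureach_uplus_of_ureach_Cplus hCE
    (fun T₁ h₁ T₂ h₂ => (hC.sameSCC h₁ h₂).1) hR hRS₀
  have hTS₀_scc : ¬ sameSCC E T.1 S₀.1 := fun hsame => hCC' (hC.eq_of_sameSCC hC' hT hS₀ hsame)
  refine ⟨T, hT, fun S hS => ⟨hC'.subset hS, Or.inr (hTS₀.trans ?_)⟩⟩
  exact ureach_of_sameSCC (fun y => notMem_uplus_of_sameSCC hTS₀_scc hTS₀.notMem_right)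
    (hC'.sameSCC hS₀ hS)

open CQA in
/-- if C' ∈ coupled⁺(C), there exists R ∈ C with S ∈ coupled⁺(R)
for every S ∈ C'. -/
theorem stmt_9 {V : Type*} [Fintype V] (E Ec : Set (V × V)) (hEc : Ec ⊆ E)
    (C C' : Set (V × V)) (hC : IsClass E (E \ Ec) C) (hC' : IsClass E (E \ Ec) C')
    (h : coupledPlusCl E C C') :
    ∃ R ∈ C, ∀ S ∈ C', coupledPlusEdge E (E \ Ec) R S :=
  stmt_9_general E Ec C C' hC hC' h
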